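/- arXiv:1902.05612 — 4 statements merged into one kernel-verified Lean document; each statement's English description precedes it below -/
import Mathlib

section
/- Under the rotation-invariant sub-Gaussian measurement model with measurements yᵢ = x* Aᵢ x for a fixed x ∈ ℂⁿ, the matrix S = (1/m)·Σ_{i=1}^m ȳᵢ·Aᵢ satisfies E[S] = 2·x x* (entrywise expectation). -/
open MeasureTheory ProbabilityTheory Matrix Complex Finset

noncomputable section

/-- The vector in `ℝ^{2n²}` of real and imaginary parts of the entries of a complex matrix. -/
def coeffVec {n : ℕ} (A : Matrix (Fin n) (Fin n) ℂ) : Fin n × Fin n × Fin 2 → ℝ :=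
  fun p => if p.2.2 = (0 : Fin 2) then (A p.1 p.2.1).re else (A p.1 p.2.1).im

/-- A real random variable is sub-Gaussian: its tails are dominated by a Gaussian tail. -/
def IsSubGaussianRV {Ω : Type} [MeasureSpace Ω] (X : Ω → ℝ) : Prop :=
  ∃ K > 0, ∀ t : ℝ, 0 ≤ t →
    (ℙ {ω | t ≤ |X ω|}).toReal ≤ 2 * Real.exp (-(t ^ 2) / K ^ 2)

/-- The rotation-invariant sub-Gaussian measurement model: the matrices `A i` are i.i.d.,
the vector of real/imaginary parts of the entries has a rotation-invariant distribution,
all one-dimensional marginals are sub-Gaussian, and each coordinate has unit variance. -/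
structure RotInvSubGaussian {Ω : Type} [MeasureSpace Ω] {n m : ℕ}
    (A : Fin m → Ω → Matrix (Fin n) (Fin n) ℂ) : Prop where
  prob : IsProbabilityMeasure (ℙ : Measure Ω)
  meas : ∀ i, Measurable fun ω => coeffVec (A i ω)
  indep : iIndepFun (fun i ω => coeffVec (A i ω)) ℙ
  ident : ∀ i j, Measure.map (fun ω => coeffVec (A i ω)) ℙ
    = Measure.map (fun ω => coeffVec (A j ω)) ℙ
  rotInv : ∀ (i : Fin m) (O : Matrix (Fin n × Fin n × Fin 2) (Fin n × Fin n × Fin 2) ℝ),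
    Oᵀ * O = 1 →
    Measure.map (fun ω => O.mulVec (coeffVec (A i ω))) ℙ
      = Measure.map (fun ω => coeffVec (A i ω)) ℙ
  subGaussian : ∀ (i : Fin m) (g : Fin n × Fin n × Fin 2 → ℝ),
    IsSubGaussianRV (fun ω => g ⬝ᵥ coeffVec (A i ω))
  unitVar : ∀ (i : Fin m) (k : Fin n × Fin n × Fin 2), ∫ ω, (coeffVec (A i ω) k) ^ 2 = 1

/-- A matrix acting on `EuclideanSpace`. -/
def mApp {n : ℕ} (M : Matrix (Fin n) (Fin n) ℂ) (v : EuclideanSpace ℂ (Fin n)) :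
    EuclideanSpace ℂ (Fin n) :=
  Matrix.toEuclideanLin M v

/-- `quadForm M u v = u* M v`. -/
def quadForm {n : ℕ} (M : Matrix (Fin n) (Fin n) ℂ) (u v : EuclideanSpace ℂ (Fin n)) : ℂ :=
  inner ℂ u (mApp M v)

/-- The spectral (operator) norm of a complex matrix. -/
def specNorm {n : ℕ} (M : Matrix (Fin n) (Fin n) ℂ) : ℝ :=
  ‖LinearMap.toContinuousLinearMap (Matrix.toEuclideanLin M)‖

/-- The outer product `q p*`. -/
def outer {n : ℕ} (q p : EuclideanSpace ℂ (Fin n)) : Matrix (Fin n) (Fin n) ℂ :=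
  Matrix.vecMulVec (fun r => q r) (fun c => starRingEnd ℂ (p c))

/-- `(1/m) Σᵢ (p* Aᵢ* q) Aᵢ − 2 q p*`. -/
def Gmat {n m : ℕ} (A : Fin m → Matrix (Fin n) (Fin n) ℂ)
    (p q : EuclideanSpace ℂ (Fin n)) : Matrix (Fin n) (Fin n) ℂ :=
  (m : ℂ)⁻¹ • (∑ i, quadForm (A i)ᴴ p q • A i) - (2 : ℂ) • outer q p

/-- Squared distance up to a global phase. -/
def distSq {n : ℕ} (z x : EuclideanSpace ℂ (Fin n)) : ℝ :=
  ‖z‖ ^ 2 + ‖x‖ ^ 2 - 2 * ‖(inner ℂ z x : ℂ)‖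

/-- The Wirtinger flow gradient of the loss `f(z) = (1/m) Σᵢ |z* Aᵢ z − x* Aᵢ x|²`. -/
def wfGrad {n m : ℕ} (A : Fin m → Matrix (Fin n) (Fin n) ℂ)
    (x z : EuclideanSpace ℂ (Fin n)) : EuclideanSpace ℂ (Fin n) :=
  (m : ℂ)⁻¹ • ∑ i,
    ((quadForm (A i)ᴴ z z - quadForm (A i)ᴴ x x) • mApp (A i) z
      + (quadForm (A i) z z - quadForm (A i) x x) • mApp (A i)ᴴ z)

/-- The spectral initialization matrix `S = (1/m) Σᵢ ȳᵢ Aᵢ` with `yᵢ = x* Aᵢ x`. -/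
def Smat {n m : ℕ} (A : Fin m → Matrix (Fin n) (Fin n) ℂ)
    (x : EuclideanSpace ℂ (Fin n)) : Matrix (Fin n) (Fin n) ℂ :=
  (m : ℂ)⁻¹ • ∑ i, starRingEnd ℂ (quadForm (A i) x x) • A i

/-- `v` is a unit right singular vector of `S` associated with the largest singular value
(which equals the spectral norm). -/
def TopRightSingVec {n : ℕ} (S : Matrix (Fin n) (Fin n) ℂ)
    (v : EuclideanSpace ℂ (Fin n)) : Prop :=
  ‖v‖ = 1 ∧ ∃ u : EuclideanSpace ℂ (Fin n), ‖u‖ = 1 ∧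
    mApp S v = (specNorm S : ℂ) • u ∧ mApp Sᴴ u = (specNorm S : ℂ) • v

end

/-!
Expanding `ȳᵢ = Σ_{a,b} x_a x̄_b conj((Aᵢ)_{ab})` reduces `E[S]_{rc}` to the moments
`E[conj(A_{ab}) A_{rc}]`. Splitting entries into real and imaginary parts, these are sums of the
second moments `E[r_k r_l]` of the coefficient vector. Rotation invariance contains the reflection
`r_k ↦ -r_k`, which forces `E[r_k r_l] = 0` for `k ≠ l`, and `E[r_k²] = 1`; hence
`E[conj(A_{ab}) A_{rc}] = 2 δ_{ar} δ_{bc}` and `E[S]_{rc} = 2 x_r x̄_c`.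
-/

section SecondMoments

variable {Ω ι : Type*} [MeasurableSpace Ω] {μ : Measure Ω} [Fintype ι] [DecidableEq ι]
  {f : Ω → ι → ℝ}

theorem integral_mul_apply_eq_zero_of_map_orthogonal (hf : Measurable f)
    (hO : ∀ O : Matrix ι ι ℝ, Oᵀ * O = 1 → μ.map (fun ω => O *ᵥ f ω) = μ.map f)
    {k l : ι} (hkl : k ≠ l) : ∫ ω, f ω k * f ω l ∂μ = 0 := by
  set s : ι → ℝ := fun p => if p = k then -1 else 1
  have hs : (diagonal s)ᵀ * diagonal s = 1 := by
    rw [diagonal_transpose, diagonal_mul_diagonal, ← diagonal_one]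
    congr 1; funext p; simp only [s]; split_ifs <;> norm_num
  have hflip : Measurable fun ω => diagonal s *ᵥ f ω :=
    (continuous_const.matrix_mulVec continuous_id).measurable.comp hf
  have hg : Measurable fun v : ι → ℝ => v k * v l := by fun_prop
  have h := calc
    ∫ ω, (diagonal s *ᵥ f ω) k * (diagonal s *ᵥ f ω) l ∂μ
        = ∫ v, v k * v l ∂μ.map (fun ω => diagonal s *ᵥ f ω) :=
          (integral_map hflip.aemeasurable hg.aestronglyMeasurable).symm
    _ = ∫ ω, f ω k * f ω l ∂μ := by
          rw [hO _ hs, integral_map hf.aemeasurable hg.aestronglyMeasurable]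
  simp only [mulVec_diagonal, s, ↓reduceIte, if_neg hkl.symm, one_mul, neg_mul,
    integral_neg] at h
  linarith

theorem integral_mul_apply_of_map_orthogonal (hf : Measurable f)
    (hO : ∀ O : Matrix ι ι ℝ, Oᵀ * O = 1 → μ.map (fun ω => O *ᵥ f ω) = μ.map f)
    (hvar : ∀ k, ∫ ω, f ω k ^ 2 ∂μ = 1) (k l : ι) :
    ∫ ω, f ω k * f ω l ∂μ = if k = l then 1 else 0 := by
  split_ifs with hkl
  · subst hkl
    simpa [sq] using hvar k
  · exact integral_mul_apply_eq_zero_of_map_orthogonal hf hO hkl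

theorem memLp_two_of_integral_sq_eq_one {g : Ω → ℝ} (hg : AEStronglyMeasurable g μ)
    (h : ∫ ω, g ω ^ 2 ∂μ = 1) : MemLp g 2 μ :=
  (memLp_two_iff_integrable_sq hg).2 (Integrable.of_integral_ne_zero (by simp [h]))

end SecondMoments

open ComplexConjugate

theorem Complex.re_conj_mul (z w : ℂ) : (conj z * w).re = z.re * w.re + z.im * w.im := by
  rw [mul_re, conj_re, conj_im]; ring

theorem Complex.im_conj_mul (z w : ℂ) : (conj z * w).im = z.re * w.im - z.im * w.re := by
  rw [mul_im, conj_re, conj_im]; ring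

section ComplexEntries

variable {Ω : Type*} [MeasurableSpace Ω] {μ : Measure Ω} {n : ℕ}

variable {B : Ω → Matrix (Fin n) (Fin n) ℂ}

theorem integrable_conj_mul_apply (hL2 : ∀ k, MemLp (fun ω => coeffVec (B ω) k) 2 μ)
    (a b r c : Fin n) : Integrable (fun ω => conj (B ω a b) * B ω r c) μ := by
  have hprod : ∀ k l, Integrable (fun ω => coeffVec (B ω) k * coeffVec (B ω) l) μ :=
    fun k l => (hL2 k).integrable_mul (hL2 l)
  refine Integrable.re_im_iff.1 ⟨?_, ?_⟩
  · simp only [RCLike.re_to_complex, Complex.re_conj_mul]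
    exact (hprod (a, b, 0) (r, c, 0)).add (hprod (a, b, 1) (r, c, 1))
  · simp only [RCLike.im_to_complex, Complex.im_conj_mul]
    exact (hprod (a, b, 0) (r, c, 1)).sub (hprod (a, b, 1) (r, c, 0))

theorem integral_conj_mul_apply (hL2 : ∀ k, MemLp (fun ω => coeffVec (B ω) k) 2 μ)
    (hcov : ∀ k l, ∫ ω, coeffVec (B ω) k * coeffVec (B ω) l ∂μ = if k = l then 1 else 0)
    (a b r c : Fin n) :
    ∫ ω, conj (B ω a b) * B ω r c ∂μ = if a = r ∧ b = c then 2 else 0 := by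
  have hprod : ∀ k l, Integrable (fun ω => coeffVec (B ω) k * coeffVec (B ω) l) μ :=
    fun k l => (hL2 k).integrable_mul (hL2 l)
  have hF := integrable_conj_mul_apply hL2 a b r c
  apply Complex.ext
  · calc (∫ ω, conj (B ω a b) * B ω r c ∂μ).re
        = ∫ ω, (coeffVec (B ω) (a, b, 0) * coeffVec (B ω) (r, c, 0)
            + coeffVec (B ω) (a, b, 1) * coeffVec (B ω) (r, c, 1)) ∂μ :=
          (integral_re hF).symm.trans (integral_congr_ae (ae_of_all _ fun ω =>
            Complex.re_conj_mul _ _))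
      _ = (if a = r ∧ b = c then 2 else 0 : ℂ).re := by
          rw [integral_add (hprod _ _) (hprod _ _), hcov, hcov]
          by_cases h : a = r ∧ b = c <;> norm_num [h]
  · calc (∫ ω, conj (B ω a b) * B ω r c ∂μ).im
        = ∫ ω, (coeffVec (B ω) (a, b, 0) * coeffVec (B ω) (r, c, 1)
            - coeffVec (B ω) (a, b, 1) * coeffVec (B ω) (r, c, 0)) ∂μ :=
          (integral_im hF).symm.trans (integral_congr_ae (ae_of_all _ fun ω =>
            Complex.im_conj_mul _ _))
      _ = (if a = r ∧ b = c then 2 else 0 : ℂ).im := by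
          rw [integral_sub (hprod _ _) (hprod _ _), hcov, hcov]
          by_cases h : a = r ∧ b = c <;> simp [h]

end ComplexEntries

section QuadraticForm

variable {Ω : Type*} [MeasurableSpace Ω] {μ : Measure Ω} {n : ℕ}

theorem quadForm_eq_sum (M : Matrix (Fin n) (Fin n) ℂ) (u v : EuclideanSpace ℂ (Fin n)) :
    quadForm M u v = ∑ a, ∑ b, conj (u a) * M a b * v b := by
  simp only [quadForm, mApp, toLpLin_apply, PiLp.inner_apply, RCLike.inner_apply,
    mulVec, dotProduct, sum_mul]
  exact sum_congr rfl fun a _ => sum_congr rfl fun b _ => by ring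

theorem conj_quadForm_mul_apply (M : Matrix (Fin n) (Fin n) ℂ) (x : EuclideanSpace ℂ (Fin n))
    (r c : Fin n) :
    conj (quadForm M x x) * M r c = ∑ a, ∑ b, x a * conj (x b) * (conj (M a b) * M r c) := by
  simp only [quadForm_eq_sum, map_sum, sum_mul, map_mul, conj_conj]
  refine sum_congr rfl fun a _ => sum_congr rfl fun b _ => by ring

variable {B : Ω → Matrix (Fin n) (Fin n) ℂ}

theorem integrable_conj_quadForm_mul_apply (hL2 : ∀ k, MemLp (fun ω => coeffVec (B ω) k) 2 μ)
    (x : EuclideanSpace ℂ (Fin n)) (r c : Fin n) :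
    Integrable (fun ω => conj (quadForm (B ω) x x) * B ω r c) μ := by
  simp_rw [conj_quadForm_mul_apply]
  exact integrable_finsetSum _ fun a _ => integrable_finsetSum _ fun b _ =>
    (integrable_conj_mul_apply hL2 a b r c).const_mul _

theorem integral_conj_quadForm_mul_apply (hL2 : ∀ k, MemLp (fun ω => coeffVec (B ω) k) 2 μ)
    (hcov : ∀ k l, ∫ ω, coeffVec (B ω) k * coeffVec (B ω) l ∂μ = if k = l then 1 else 0)
    (x : EuclideanSpace ℂ (Fin n)) (r c : Fin n) :
    ∫ ω, conj (quadForm (B ω) x x) * B ω r c ∂μ = 2 * (x r * conj (x c)) := by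
  simp_rw [conj_quadForm_mul_apply]
  rw [integral_finsetSum _ fun a _ => integrable_finsetSum _ fun b _ =>
    (integrable_conj_mul_apply hL2 a b r c).const_mul _]
  have hinner : ∀ a, ∫ ω, ∑ b, x a * conj (x b) * (conj (B ω a b) * B ω r c) ∂μ
      = ∑ b, x a * conj (x b) * (if a = r ∧ b = c then 2 else 0) := fun a => by
    rw [integral_finsetSum _ fun b _ => (integrable_conj_mul_apply hL2 a b r c).const_mul _]
    simp_rw [integral_const_mul, integral_conj_mul_apply hL2 hcov]
  simp only [hinner, ite_and, mul_ite, mul_zero, sum_ite_irrel, sum_ite_eq', mem_univ, ↓reduceIte,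
    sum_const_zero]
  ring

end QuadraticForm

theorem Smat_apply {n m : ℕ} (A : Fin m → Matrix (Fin n) (Fin n) ℂ)
    (x : EuclideanSpace ℂ (Fin n)) (r c : Fin n) :
    Smat A x r c = (m : ℂ)⁻¹ * ∑ i, conj (quadForm (A i) x x) * A i r c := by
  simp only [Smat, Matrix.smul_apply, Matrix.sum_apply, smul_eq_mul]

/-- Under the rotation-invariant sub-Gaussian measurement model with `yᵢ = x* Aᵢ x`,
the matrix `S = (1/m) Σᵢ ȳᵢ Aᵢ` satisfies `E[S] = 2 x x*` entrywise. -/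
theorem expectation_S_eq :
    ∀ (n m : ℕ) (Ω : Type) [MeasureSpace Ω]
      (A : Fin m → Ω → Matrix (Fin n) (Fin n) ℂ) (x : EuclideanSpace ℂ (Fin n)),
      RotInvSubGaussian A → 0 < m →
      ∀ r c : Fin n,
        ∫ ω, Smat (fun i => A i ω) x r c = 2 * (x r * starRingEnd ℂ (x c)) := by
  intro n m Ω _ A x h hm r c
  have hL2 : ∀ i k, MemLp (fun ω => coeffVec (A i ω) k) 2 := fun i k =>
    memLp_two_of_integral_sq_eq_one
      ((measurable_pi_apply k).comp (h.meas i)).aestronglyMeasurable (h.unitVar i k)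
  have hcov := fun i => integral_mul_apply_of_map_orthogonal (h.meas i) (h.rotInv i) (h.unitVar i)
  simp_rw [Smat_apply]
  rw [integral_const_mul,
    integral_finsetSum _ fun i _ => integrable_conj_quadForm_mul_apply (hL2 i) x r c]
  simp_rw [integral_conj_quadForm_mul_apply (hL2 _) (hcov _)]
  rw [sum_const, card_univ, Fintype.card_fin, nsmul_eq_mul,
    inv_mul_cancel_left₀ (Nat.cast_ne_zero.2 hm.ne')]
end

section
/- Let f : ℂⁿ → ℝ with (Wirtinger) gradient ∇f, let x ∈ ℂⁿ, and suppose the regularity condition RC(α, β, ρ) holds: for all z with dist(z, x) ≤ ρ‖x‖₂, Re(⟨∇f(z), z − x·e^{jφ_min}⟩) ≥ (1/α)·dist²(z, x) + (1/β)·‖∇f(z)‖₂², where φ_min minimizes ‖z − x·e^{jφ}‖₂ over φ. Then for any step size η with 0 < η ≤ 2/β and any z with dist(z, x) ≤ ρ‖x‖₂, the gradient step z⁺ = z − η·∇f(z) satisfies dist²(z⁺, x) ≤ (1 − 2η/α)·dist²(z, x); consequently, iterates z⁽ᵗ⁺¹⁾ = z⁽ᵗ⁾ − η∇f(z⁽ᵗ⁾)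 started from z⁽⁰⁾ with dist(z⁽⁰⁾, x) ≤ ρ‖x‖₂ satisfy dist²(z⁽ᵗ⁾, x) ≤ (1 − 2η/α)ᵗ·dist²(z⁽⁰⁾, x) for all t, provided αβ ≥ 4. -/
open MeasureTheory ProbabilityTheory Matrix Complex Finset

/-!
A gradient step moves `z` towards the nearest rotation `c • x` of `x`. Expanding
`‖z - c • x - η • g z‖²` and inserting the regularity condition bounds it by
`(1 - 2η/α) dist²(z, x) + η (η - 2/β) ‖g z‖²`, and the last term is `≤ 0` for `η ≤ 2/β`;
since `dist²(z⁺, x)` is at most the distance to any rotation of `x`, this is the one-step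
contraction. When `αβ ≥ 4` the factor `1 - 2η/α` lies in `[0, 1]`, so the iterates never leave
the region where the regularity condition holds and induction gives linear convergence.
-/

section GradientStep

variable {𝕜 E : Type*} [RCLike 𝕜] [NormedAddCommGroup E] [InnerProductSpace 𝕜 E]

theorem norm_sub_smul_sq_le_of_re_inner_ge {u v : E} {α β η : ℝ}
    (h : α⁻¹ * ‖u‖ ^ 2 + β⁻¹ * ‖v‖ ^ 2 ≤ RCLike.re (inner 𝕜 v u))
    (hη : 0 ≤ η) (hηβ : η ≤ 2 / β) :
    ‖u - (η : 𝕜) • v‖ ^ 2 ≤ (1 - 2 * η / α) * ‖u‖ ^ 2 := by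
  have hexpand : ‖u - (η : 𝕜) • v‖ ^ 2
      = ‖u‖ ^ 2 - 2 * η * RCLike.re (inner 𝕜 v u) + η ^ 2 * ‖v‖ ^ 2 := by
    rw [@norm_sub_sq 𝕜, inner_smul_right, RCLike.re_ofReal_mul, inner_re_symm, norm_smul,
      RCLike.norm_ofReal, abs_of_nonneg hη]
    ring
  have hstep : η * (η - 2 / β) * ‖v‖ ^ 2 ≤ 0 :=
    mul_nonpos_of_nonpos_of_nonneg (mul_nonpos_of_nonneg_of_nonpos hη (by linarith)) (sq_nonneg _)
  rw [hexpand]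
  calc ‖u‖ ^ 2 - 2 * η * RCLike.re (inner 𝕜 v u) + η ^ 2 * ‖v‖ ^ 2
      ≤ ‖u‖ ^ 2 - 2 * η * (α⁻¹ * ‖u‖ ^ 2 + β⁻¹ * ‖v‖ ^ 2) + η ^ 2 * ‖v‖ ^ 2 := by
        nlinarith
    _ = (1 - 2 * η / α) * ‖u‖ ^ 2 + η * (η - 2 / β) * ‖v‖ ^ 2 := by ring
    _ ≤ (1 - 2 * η / α) * ‖u‖ ^ 2 := by linarith

end GradientStep

section PhaseDistance

variable {n : ℕ}

theorem exp_neg_arg_mul_I_mul_self (w : ℂ) :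
    Complex.exp (-(Complex.arg w) * Complex.I) * w = (‖w‖ : ℂ) := by
  conv_lhs => arg 2; rw [← Complex.norm_mul_exp_arg_mul_I w]
  rw [mul_left_comm, ← Complex.exp_add, neg_mul, neg_add_cancel, Complex.exp_zero, mul_one]

theorem norm_exp_neg_ofReal_mul_I (θ : ℝ) : ‖Complex.exp (-(θ : ℂ) * Complex.I)‖ = 1 := by
  rw [← Complex.ofReal_neg, Complex.norm_exp_ofReal_mul_I]

theorem distSq_le_norm_sub_smul (z x : EuclideanSpace ℂ (Fin n)) {c : ℂ} (hc : ‖c‖ = 1) :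
    distSq z x ≤ ‖z - c • x‖ ^ 2 := by
  have hre : (inner ℂ z (c • x)).re ≤ ‖(inner ℂ z x : ℂ)‖ := by
    calc (inner ℂ z (c • x)).re ≤ ‖inner ℂ z (c • x)‖ := Complex.re_le_norm _
      _ = ‖(inner ℂ z x : ℂ)‖ := by rw [inner_smul_right, norm_mul, hc, one_mul]
  rw [distSq, @norm_sub_sq ℂ, norm_smul, hc, one_mul]
  simp only [RCLike.re_to_complex]
  linarith

theorem distSq_eq_norm_sub_exp_neg_arg_smul (z x : EuclideanSpace ℂ (Fin n)) :
    distSq z x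
      = ‖z - Complex.exp (-(Complex.arg (inner ℂ z x : ℂ)) * Complex.I) • x‖ ^ 2 := by
  rw [distSq, @norm_sub_sq ℂ, norm_smul, norm_exp_neg_ofReal_mul_I, one_mul, inner_smul_right,
    exp_neg_arg_mul_I_mul_self]
  simp only [RCLike.re_to_complex, Complex.ofReal_re]
  ring

theorem distSq_nonneg (z x : EuclideanSpace ℂ (Fin n)) : 0 ≤ distSq z x := by
  rw [distSq_eq_norm_sub_exp_neg_arg_smul]
  positivity

end PhaseDistance

theorem le_pow_mul_of_contract_within {d : ℕ → ℝ} {q R : ℝ} (hq₀ : 0 ≤ q) (hq₁ : q ≤ 1)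
    (hd₀ : 0 ≤ d 0) (hR : d 0 ≤ R) (hstep : ∀ t, d t ≤ R → d (t + 1) ≤ q * d t) (t : ℕ) :
    d t ≤ q ^ t * d 0 := by
  induction t with
  | zero => simp
  | succ t ih =>
    have hqt : q ^ t * d 0 ≤ d 0 := mul_le_of_le_one_left hd₀ (pow_le_one₀ hq₀ hq₁)
    calc d (t + 1) ≤ q * d t := hstep t (by linarith)
      _ ≤ q * (q ^ t * d 0) := mul_le_mul_of_nonneg_left ih hq₀
      _ = q ^ (t + 1) * d 0 := by ring

theorem one_sub_two_mul_div_mem_Icc {α β η : ℝ} (hη : 0 < η) (hηβ : η ≤ 2 / β)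
    (hαβ : 4 ≤ α * β) : 1 - 2 * η / α ∈ Set.Icc 0 1 := by
  have hβ : 0 < β := by
    by_contra! hβ
    linarith [div_nonpos_of_nonneg_of_nonpos zero_le_two hβ]
  have hα : 0 < α := pos_of_mul_pos_left (by linarith) hβ.le
  have hηα : 2 * η ≤ α := by
    rw [le_div_iff₀ hβ] at hηβ
    nlinarith
  constructor
  · rw [sub_nonneg, div_le_one hα]
    exact hηα
  · linarith [div_pos (mul_pos two_pos hη) hα]

theorem regularity_condition_implies_linear_convergence_general {n : ℕ}
    (g : EuclideanSpace ℂ (Fin n) → EuclideanSpace ℂ (Fin n))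
    (x : EuclideanSpace ℂ (Fin n)) (α β ρ η : ℝ)
    (hRC : ∀ z : EuclideanSpace ℂ (Fin n), distSq z x ≤ ρ ^ 2 * ‖x‖ ^ 2 →
      (inner ℂ (g z) (z - Complex.exp (-(Complex.arg (inner ℂ z x : ℂ)) * Complex.I) • x) : ℂ).re
        ≥ α⁻¹ * distSq z x + β⁻¹ * ‖g z‖ ^ 2)
    (hη : 0 < η) (hη2 : η ≤ 2 / β) :
    (∀ z : EuclideanSpace ℂ (Fin n), distSq z x ≤ ρ ^ 2 * ‖x‖ ^ 2 →
      distSq (z - (η : ℂ) • g z) x ≤ (1 - 2 * η / α) * distSq z x) ∧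
    (4 ≤ α * β →
      ∀ zseq : ℕ → EuclideanSpace ℂ (Fin n),
        (∀ t, zseq (t + 1) = zseq t - (η : ℂ) • g (zseq t)) →
        distSq (zseq 0) x ≤ ρ ^ 2 * ‖x‖ ^ 2 →
        ∀ t, distSq (zseq t) x ≤ (1 - 2 * η / α) ^ t * distSq (zseq 0) x) := by
  have hcontract : ∀ z, distSq z x ≤ ρ ^ 2 * ‖x‖ ^ 2 →
      distSq (z - (η : ℂ) • g z) x ≤ (1 - 2 * η / α) * distSq z x := by
    intro z hz
    set c := Complex.exp (-(Complex.arg (inner ℂ z x : ℂ)) * Complex.I)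
    have hRCz := hRC z hz
    rw [distSq_eq_norm_sub_exp_neg_arg_smul z x] at hRCz ⊢
    calc distSq (z - (η : ℂ) • g z) x ≤ ‖z - (η : ℂ) • g z - c • x‖ ^ 2 :=
          distSq_le_norm_sub_smul _ _ (norm_exp_neg_ofReal_mul_I _)
      _ = ‖z - c • x - (η : ℂ) • g z‖ ^ 2 := by rw [sub_right_comm]
      _ ≤ (1 - 2 * η / α) * ‖z - c • x‖ ^ 2 :=
          norm_sub_smul_sq_le_of_re_inner_ge hRCz hη.le hη2
  refine ⟨hcontract, fun hαβ zseq hrec h0 => ?_⟩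
  obtain ⟨hq₀, hq₁⟩ := one_sub_two_mul_div_mem_Icc hη hη2 hαβ
  exact le_pow_mul_of_contract_within hq₀ hq₁ (distSq_nonneg _ _) h0
    fun t ht => hrec t ▸ hcontract (zseq t) ht

/-- If the regularity condition `RC(α, β, ρ)` holds for a gradient map `g`, then for any
step size `0 < η ≤ 2/β` a gradient step contracts the squared distance by `(1 − 2η/α)`
inside `E(ρ)`; consequently (provided `αβ ≥ 4`) the iterates converge linearly. -/
theorem regularity_condition_implies_linear_convergence {n : ℕ}
    (g : EuclideanSpace ℂ (Fin n) → EuclideanSpace ℂ (Fin n))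
    (x : EuclideanSpace ℂ (Fin n)) (α β ρ η : ℝ)
    (hα : 0 < α) (hβ : 0 < β) (hρ : 0 < ρ)
    (hRC : ∀ z : EuclideanSpace ℂ (Fin n), distSq z x ≤ ρ ^ 2 * ‖x‖ ^ 2 →
      (inner ℂ (g z) (z - Complex.exp (-(Complex.arg (inner ℂ z x : ℂ)) * Complex.I) • x) : ℂ).re
        ≥ α⁻¹ * distSq z x + β⁻¹ * ‖g z‖ ^ 2)
    (hη : 0 < η) (hη2 : η ≤ 2 / β) :
    (∀ z : EuclideanSpace ℂ (Fin n), distSq z x ≤ ρ ^ 2 * ‖x‖ ^ 2 →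
      distSq (z - (η : ℂ) • g z) x ≤ (1 - 2 * η / α) * distSq z x) ∧
    (4 ≤ α * β →
      ∀ zseq : ℕ → EuclideanSpace ℂ (Fin n),
        (∀ t, zseq (t + 1) = zseq t - (η : ℂ) • g (zseq t)) →
        distSq (zseq 0) x ≤ ρ ^ 2 * ‖x‖ ^ 2 →
        ∀ t, distSq (zseq t) x ≤ (1 - 2 * η / α) ^ t * distSq (zseq 0) x) :=
  regularity_condition_implies_linear_convergence_general g x α β ρ η hRC hη hη2
end

section
/- Fix ν > 0 and matrices A₁, …, A_m ∈ ℂ^{n×n} such that ‖(1/m)·Σ_{i=1}^m (p* Aᵢ* q)·Aᵢ − 2 q p*‖ < ν for all unit vectors p, q ∈ ℂⁿ. Then for all h, x ∈ ℂⁿ with h* x real, the bound (1/m)·Σ_{i=1}^m Re(h* Aᵢ* x · h* Aᵢ x) ≥ 2·(h* x)² − ν·‖h‖₂²·‖x‖₂² holds. -/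
open MeasureTheory ProbabilityTheory Matrix Complex Finset

/-! Writing `G(p, q)` for the matrix of the hypothesis, one has
`h* G(h, x) x = (1/m) Σᵢ (h* Aᵢ* x)(h* Aᵢ x) − 2 (h* x)²`, so the claim is the real part of
`|h* G(h, x) x| ≤ ν ‖h‖² ‖x‖²`. Since `G` is sesquilinear in `(p, q)`, this follows from the
spectral-norm bound at the unit vectors `h / ‖h‖` and `x / ‖x‖`. -/

section QuadForm

variable {n : ℕ}

theorem quadForm_sub (M N : Matrix (Fin n) (Fin n) ℂ) (u v : EuclideanSpace ℂ (Fin n)) :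
    quadForm (M - N) u v = quadForm M u v - quadForm N u v := by
  simp [quadForm, mApp]

theorem quadForm_smul (c : ℂ) (M : Matrix (Fin n) (Fin n) ℂ) (u v : EuclideanSpace ℂ (Fin n)) :
    quadForm (c • M) u v = c * quadForm M u v := by
  simp [quadForm, mApp]

theorem quadForm_sum {ι : Type*} (s : Finset ι) (M : ι → Matrix (Fin n) (Fin n) ℂ)
    (u v : EuclideanSpace ℂ (Fin n)) :
    quadForm (∑ i ∈ s, M i) u v = ∑ i ∈ s, quadForm (M i) u v := by
  simp [quadForm, mApp]

theorem quadForm_smul_left (c : ℂ) (M : Matrix (Fin n) (Fin n) ℂ)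
    (u v : EuclideanSpace ℂ (Fin n)) :
    quadForm M (c • u) v = starRingEnd ℂ c * quadForm M u v :=
  inner_smul_left _ _ _

theorem quadForm_smul_right (c : ℂ) (M : Matrix (Fin n) (Fin n) ℂ)
    (u v : EuclideanSpace ℂ (Fin n)) :
    quadForm M u (c • v) = c * quadForm M u v := by
  simp [quadForm, mApp]

theorem quadForm_outer (q p u v : EuclideanSpace ℂ (Fin n)) :
    quadForm (outer q p) u v = inner ℂ p v * inner ℂ u q := by
  simp only [quadForm, mApp, outer, Matrix.toLpLin_apply, PiLp.inner_apply,
    RCLike.inner_apply, Matrix.mulVec, Matrix.vecMulVec_apply, dotProduct, Finset.mul_sum,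
    Finset.sum_mul]
  exact Finset.sum_congr rfl fun _ _ => Finset.sum_congr rfl fun _ _ => by ring

theorem norm_quadForm_le (M : Matrix (Fin n) (Fin n) ℂ) (u v : EuclideanSpace ℂ (Fin n)) :
    ‖quadForm M u v‖ ≤ specNorm M * ‖u‖ * ‖v‖ :=
  calc ‖quadForm M u v‖ ≤ ‖u‖ * ‖mApp M v‖ := norm_inner_le_norm u _
    _ ≤ ‖u‖ * (specNorm M * ‖v‖) := by
        gcongr
        exact (LinearMap.toContinuousLinearMap (Matrix.toEuclideanLin M)).le_opNorm v
    _ = specNorm M * ‖u‖ * ‖v‖ := by ring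

end QuadForm

section Gmat

variable {n m : ℕ} (A : Fin m → Matrix (Fin n) (Fin n) ℂ)

theorem quadForm_Gmat (p q u v : EuclideanSpace ℂ (Fin n)) :
    quadForm (Gmat A p q) u v = (m : ℂ)⁻¹ * ∑ i, quadForm (A i)ᴴ p q * quadForm (A i) u v
      - 2 * (inner ℂ p v * inner ℂ u q) := by
  simp only [Gmat, quadForm_sub, quadForm_smul, quadForm_sum, quadForm_outer]

theorem quadForm_Gmat_smul (c d : ℂ) (p q u v : EuclideanSpace ℂ (Fin n)) :
    quadForm (Gmat A (c • p) (d • q)) u v = starRingEnd ℂ c * d * quadForm (Gmat A p q) u v := by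
  simp only [quadForm_Gmat, quadForm_smul_left, quadForm_smul_right, inner_smul_left,
    inner_smul_right, Finset.mul_sum]
  rw [mul_sub, Finset.mul_sum]
  congr 1
  · exact Finset.sum_congr rfl fun _ _ => by ring
  · ring

theorem norm_quadForm_Gmat_self_le {ν : ℝ}
    (hA : ∀ p q : EuclideanSpace ℂ (Fin n), ‖p‖ = 1 → ‖q‖ = 1 → specNorm (Gmat A p q) < ν)
    (p q : EuclideanSpace ℂ (Fin n)) :
    ‖quadForm (Gmat A p q) p q‖ ≤ ν * ‖p‖ ^ 2 * ‖q‖ ^ 2 := by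
  rcases eq_or_ne p 0 with rfl | hp
  · simp [quadForm]
  rcases eq_or_ne q 0 with rfl | hq
  · simp [quadForm, mApp]
  have hp₀ : 0 < ‖p‖ := norm_pos_iff.mpr hp
  have hq₀ : 0 < ‖q‖ := norm_pos_iff.mpr hq
  have hunit := hA _ _ (norm_smul_inv_norm (𝕜 := ℂ) hp) (norm_smul_inv_norm (𝕜 := ℂ) hq)
  have hbound := norm_quadForm_le (Gmat A ((‖p‖ : ℂ)⁻¹ • p) ((‖q‖ : ℂ)⁻¹ • q)) p q
  rw [quadForm_Gmat_smul] at hbound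
  simp only [norm_mul, map_inv₀, Complex.conj_ofReal, norm_inv, Complex.norm_real, norm_norm]
    at hbound
  calc ‖quadForm (Gmat A p q) p q‖
      = ‖p‖ * ‖q‖ * (‖p‖⁻¹ * ‖q‖⁻¹ * ‖quadForm (Gmat A p q) p q‖) := by field_simp
    _ ≤ ‖p‖ * ‖q‖ * (ν * ‖p‖ * ‖q‖) :=
        mul_le_mul_of_nonneg_left (hbound.trans (by gcongr; exact hunit.le)) (by positivity)
    _ = ν * ‖p‖ ^ 2 * ‖q‖ ^ 2 := by ring

end Gmat

theorem second_term_lower_bound_general {n m : ℕ} (ν : ℝ)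
    (A : Fin m → Matrix (Fin n) (Fin n) ℂ)
    (hA : ∀ p q : EuclideanSpace ℂ (Fin n), ‖p‖ = 1 → ‖q‖ = 1 →
      specNorm (Gmat A p q) < ν)
    (h x : EuclideanSpace ℂ (Fin n)) (hreal : (inner ℂ h x : ℂ).im = 0) :
    (m : ℝ)⁻¹ * ∑ i, (quadForm (A i)ᴴ h x * quadForm (A i) h x).re
      ≥ 2 * (inner ℂ h x : ℂ).re ^ 2 - ν * ‖h‖ ^ 2 * ‖x‖ ^ 2 := by
  have hbound := norm_quadForm_Gmat_self_le A hA h x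
  have hre : (quadForm (Gmat A h x) h x).re
      = (m : ℝ)⁻¹ * ∑ i, (quadForm (A i)ᴴ h x * quadForm (A i) h x).re
        - 2 * (inner ℂ h x : ℂ).re ^ 2 := by
    rw [quadForm_Gmat, ← Complex.ofReal_natCast, ← Complex.ofReal_inv]
    simp [Complex.mul_re, Complex.re_sum, hreal, sq]
  linarith [(abs_le.mp ((Complex.abs_re_le_norm _).trans hbound)).1]

/-- Lower bound on `(1/m) Σᵢ Re(h* Aᵢ* x · h* Aᵢ x)` under the uniform spectral-norm
concentration hypothesis, for `h* x` real. -/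
theorem second_term_lower_bound {n m : ℕ} (ν : ℝ) (hν : 0 < ν)
    (A : Fin m → Matrix (Fin n) (Fin n) ℂ)
    (hA : ∀ p q : EuclideanSpace ℂ (Fin n), ‖p‖ = 1 → ‖q‖ = 1 →
      specNorm (Gmat A p q) < ν)
    (h x : EuclideanSpace ℂ (Fin n)) (hreal : (inner ℂ h x : ℂ).im = 0) :
    (m : ℝ)⁻¹ * ∑ i, (quadForm (A i)ᴴ h x * quadForm (A i) h x).re
      ≥ 2 * (inner ℂ h x : ℂ).re ^ 2 - ν * ‖h‖ ^ 2 * ‖x‖ ^ 2 :=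
  second_term_lower_bound_general ν A hA h x hreal
end

section
/- Fix ν > 0, ρ > 0, and matrices A₁, …, A_m ∈ ℂ^{n×n} such that ‖(1/m)·Σ_{i=1}^m (p* Aᵢ* q)·Aᵢ − 2 q p*‖ < ν for all unit vectors p, q ∈ ℂⁿ. Define g(z) = (1/m)·Σ_{i=1}^m [(z* Aᵢ* z − x* Aᵢ* x)·Aᵢ z + (z* Aᵢ z − x* Aᵢ x)·Aᵢ* z]. Then for all h, x ∈ ℂⁿ with ‖h‖₂/‖x‖₂ ≤ ρ, taking z = x + h: ‖g(z)‖₂² ≤ c₂(ν, ρ)·‖h‖₂²·‖x‖₂⁴, where c₂(ν, ρ) = 4·(2 + ν)²·(ρ² + 3ρ + 2)². -/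
open MeasureTheory ProbabilityTheory Matrix Complex Finset

/-!
Write `z = x + h` and `M = (1/m) Σᵢ (z* Aᵢ* z − x* Aᵢ* x) Aᵢ`, so that the gradient is
`M z + M* z`. Since `z* Aᵢ* z − x* Aᵢ* x = h* Aᵢ* z + x* Aᵢ* h`, we get `M = B(h, z) + B(x, h)`
with `B(p, q) = (1/m) Σᵢ (p* Aᵢ* q) Aᵢ = G(p, q) + 2 q p*`. The hypothesis on unit vectors gives
`‖G(p, q)‖ ≤ ν ‖p‖ ‖q‖` by homogeneity, hence `‖B(p, q)‖ ≤ (2 + ν) ‖p‖ ‖q‖` and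
`‖∇f(z)‖ ≤ 2 (2 + ν) ‖h‖ ‖z‖ (‖z‖ + ‖x‖)`; it remains to use `‖z‖ ≤ (1 + ρ) ‖x‖`.
-/

-- `specNorm M` is definitionally `‖M‖` for this norm.
open scoped Matrix.Norms.L2Operator

section SpectralNorm

variable {n : ℕ}

theorem norm_mApp_le (M : Matrix (Fin n) (Fin n) ℂ) (v : EuclideanSpace ℂ (Fin n)) :
    ‖mApp M v‖ ≤ ‖M‖ * ‖v‖ :=
  (toEuclideanCLM (n := Fin n) (𝕜 := ℂ) M).le_opNorm v

theorem mApp_outer (q p v : EuclideanSpace ℂ (Fin n)) :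
    mApp (outer q p) v = inner ℂ p v • q := by
  ext j
  simp [mApp, outer, Matrix.mulVec, Matrix.vecMulVec, dotProduct, PiLp.inner_apply,
    Finset.mul_sum, mul_comm, mul_left_comm]

theorem norm_outer_le (q p : EuclideanSpace ℂ (Fin n)) : ‖outer q p‖ ≤ ‖q‖ * ‖p‖ := by
  refine ContinuousLinearMap.opNorm_le_bound _ (by positivity) fun v => ?_
  change ‖mApp (outer q p) v‖ ≤ _
  rw [mApp_outer, norm_smul]
  calc ‖inner ℂ p v‖ * ‖q‖ ≤ ‖p‖ * ‖v‖ * ‖q‖ := by gcongr; exact norm_inner_le_norm p v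
    _ = ‖q‖ * ‖p‖ * ‖v‖ := by ring

end SpectralNorm

section QuadForm

variable {n : ℕ}

theorem quadForm_conjTranspose (M : Matrix (Fin n) (Fin n) ℂ) (u v : EuclideanSpace ℂ (Fin n)) :
    quadForm Mᴴ u v = starRingEnd ℂ (quadForm M v u) := by
  rw [quadForm, quadForm, mApp, mApp, Matrix.toEuclideanLin_conjTranspose_eq_adjoint,
    LinearMap.adjoint_inner_right, inner_conj_symm]

theorem quadForm_smul_smul (M : Matrix (Fin n) (Fin n) ℂ) (a b : ℂ)
    (u v : EuclideanSpace ℂ (Fin n)) :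
    quadForm M (a • u) (b • v) = (starRingEnd ℂ a * b) • quadForm M u v := by
  simp only [quadForm, mApp, map_smul, inner_smul_left, inner_smul_right, smul_eq_mul]
  ring

theorem quadForm_add_self_sub (M : Matrix (Fin n) (Fin n) ℂ) (x h : EuclideanSpace ℂ (Fin n)) :
    quadForm M (x + h) (x + h) - quadForm M x x = quadForm M h (x + h) + quadForm M x h := by
  simp only [quadForm, mApp, map_add, inner_add_left, inner_add_right]
  ring

end QuadForm

section MeasurementAverage

variable {n m : ℕ}

noncomputable def measAvg (A : Fin m → Matrix (Fin n) (Fin n) ℂ) (p q : EuclideanSpace ℂ (Fin n)) :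
    Matrix (Fin n) (Fin n) ℂ :=
  (m : ℂ)⁻¹ • ∑ i, quadForm (A i)ᴴ p q • A i

theorem Gmat_eq_measAvg_sub (A : Fin m → Matrix (Fin n) (Fin n) ℂ)
    (p q : EuclideanSpace ℂ (Fin n)) :
    Gmat A p q = measAvg A p q - (2 : ℂ) • outer q p := rfl

theorem measAvg_smul_smul (A : Fin m → Matrix (Fin n) (Fin n) ℂ) (a b : ℂ)
    (p q : EuclideanSpace ℂ (Fin n)) :
    measAvg A (a • p) (b • q) = (starRingEnd ℂ a * b) • measAvg A p q := by
  simp only [measAvg, quadForm_smul_smul, smul_assoc, ← Finset.smul_sum]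
  rw [smul_comm]

theorem outer_smul_smul (a b : ℂ) (q p : EuclideanSpace ℂ (Fin n)) :
    outer (b • q) (a • p) = (starRingEnd ℂ a * b) • outer q p := by
  ext i j
  simp only [outer, Matrix.vecMulVec_apply, PiLp.smul_apply, smul_eq_mul, map_mul,
    Matrix.smul_apply]
  ring

theorem Gmat_smul_smul (A : Fin m → Matrix (Fin n) (Fin n) ℂ) (a b : ℂ)
    (p q : EuclideanSpace ℂ (Fin n)) :
    Gmat A (a • p) (b • q) = (starRingEnd ℂ a * b) • Gmat A p q := by
  rw [Gmat_eq_measAvg_sub, Gmat_eq_measAvg_sub, measAvg_smul_smul, outer_smul_smul, smul_sub,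
    smul_comm (2 : ℂ)]

theorem norm_Gmat_le {ν : ℝ} {A : Fin m → Matrix (Fin n) (Fin n) ℂ}
    (hA : ∀ p q : EuclideanSpace ℂ (Fin n), ‖p‖ = 1 → ‖q‖ = 1 → ‖Gmat A p q‖ ≤ ν)
    (p q : EuclideanSpace ℂ (Fin n)) : ‖Gmat A p q‖ ≤ ν * (‖p‖ * ‖q‖) := by
  rcases eq_or_ne p 0 with rfl | hp
  · simpa using Gmat_smul_smul A 0 1 0 q
  rcases eq_or_ne q 0 with rfl | hq
  · simpa using Gmat_smul_smul A 1 0 p 0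
  have hunit : ‖Gmat A ((‖p‖⁻¹ : ℂ) • p) ((‖q‖⁻¹ : ℂ) • q)‖ ≤ ν :=
    hA _ _ (norm_smul_inv_norm hp) (norm_smul_inv_norm hq)
  rw [Gmat_smul_smul, norm_smul] at hunit
  simp only [map_inv₀, Complex.conj_ofReal, norm_mul, norm_inv, Complex.norm_real,
    norm_norm] at hunit
  rw [← mul_inv, inv_mul_le_iff₀ (by positivity)] at hunit
  linarith

theorem norm_measAvg_le {ν : ℝ} {A : Fin m → Matrix (Fin n) (Fin n) ℂ}
    (hA : ∀ p q : EuclideanSpace ℂ (Fin n), ‖p‖ = 1 → ‖q‖ = 1 → ‖Gmat A p q‖ ≤ ν)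
    (p q : EuclideanSpace ℂ (Fin n)) : ‖measAvg A p q‖ ≤ (2 + ν) * (‖p‖ * ‖q‖) := by
  have hG : measAvg A p q = Gmat A p q + (2 : ℂ) • outer q p := by
    rw [Gmat_eq_measAvg_sub, sub_add_cancel]
  calc ‖measAvg A p q‖ ≤ ‖Gmat A p q‖ + 2 * ‖outer q p‖ := by
        rw [hG]; refine (norm_add_le _ _).trans ?_; rw [norm_smul, Complex.norm_two]
    _ ≤ ν * (‖p‖ * ‖q‖) + 2 * (‖q‖ * ‖p‖) := by
        gcongr
        exacts [norm_Gmat_le hA p q, norm_outer_le q p]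
    _ = (2 + ν) * (‖p‖ * ‖q‖) := by ring

end MeasurementAverage

section Gradient

variable {n m : ℕ}

noncomputable def residualMat (A : Fin m → Matrix (Fin n) (Fin n) ℂ)
    (x z : EuclideanSpace ℂ (Fin n)) : Matrix (Fin n) (Fin n) ℂ :=
  (m : ℂ)⁻¹ • ∑ i, (quadForm (A i)ᴴ z z - quadForm (A i)ᴴ x x) • A i

theorem mApp_smul_sum (c : ℂ) (w : Fin m → ℂ) (A : Fin m → Matrix (Fin n) (Fin n) ℂ)
    (v : EuclideanSpace ℂ (Fin n)) :
    mApp (c • ∑ i, w i • A i) v = c • ∑ i, w i • mApp (A i) v := by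
  simp only [mApp, map_smul, map_sum, LinearMap.smul_apply, LinearMap.sum_apply]

theorem residualMat_conjTranspose (A : Fin m → Matrix (Fin n) (Fin n) ℂ)
    (x z : EuclideanSpace ℂ (Fin n)) :
    (residualMat A x z)ᴴ = (m : ℂ)⁻¹ • ∑ i, (quadForm (A i) z z - quadForm (A i) x x) • (A i)ᴴ := by
  simp only [residualMat, conjTranspose_smul, conjTranspose_sum, star_sub,
    quadForm_conjTranspose, star_inv₀, Complex.conj_natCast, RCLike.star_def, Complex.conj_conj]

theorem wfGrad_eq_mApp_residualMat (A : Fin m → Matrix (Fin n) (Fin n) ℂ)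
    (x z : EuclideanSpace ℂ (Fin n)) :
    wfGrad A x z = mApp (residualMat A x z) z + mApp (residualMat A x z)ᴴ z := by
  rw [residualMat_conjTranspose, residualMat, mApp_smul_sum, mApp_smul_sum, wfGrad,
    ← smul_add, ← Finset.sum_add_distrib]

theorem residualMat_add_right (A : Fin m → Matrix (Fin n) (Fin n) ℂ)
    (x h : EuclideanSpace ℂ (Fin n)) :
    residualMat A x (x + h) = measAvg A h (x + h) + measAvg A x h := by
  simp only [residualMat, measAvg, quadForm_add_self_sub, add_smul, Finset.sum_add_distrib,
    smul_add]

theorem norm_wfGrad_le {ν : ℝ} {A : Fin m → Matrix (Fin n) (Fin n) ℂ}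
    (hA : ∀ p q : EuclideanSpace ℂ (Fin n), ‖p‖ = 1 → ‖q‖ = 1 → ‖Gmat A p q‖ ≤ ν)
    (x h : EuclideanSpace ℂ (Fin n)) :
    ‖wfGrad A x (x + h)‖ ≤ 2 * (2 + ν) * ‖h‖ * ‖x + h‖ * (‖x + h‖ + ‖x‖) := by
  set M := residualMat A x (x + h) with hM_def
  have hM : ‖M‖ ≤ (2 + ν) * (‖h‖ * ‖x + h‖) + (2 + ν) * (‖x‖ * ‖h‖) := by
    rw [hM_def, residualMat_add_right]
    exact (norm_add_le _ _).trans (add_le_add (norm_measAvg_le hA _ _) (norm_measAvg_le hA _ _))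
  calc ‖wfGrad A x (x + h)‖ ≤ ‖M‖ * ‖x + h‖ + ‖Mᴴ‖ * ‖x + h‖ := by
        rw [wfGrad_eq_mApp_residualMat]
        exact (norm_add_le _ _).trans (add_le_add (norm_mApp_le _ _) (norm_mApp_le _ _))
    _ = 2 * ‖M‖ * ‖x + h‖ := by rw [l2_opNorm_conjTranspose]; ring
    _ ≤ 2 * ((2 + ν) * (‖h‖ * ‖x + h‖) + (2 + ν) * (‖x‖ * ‖h‖)) * ‖x + h‖ := by gcongr
    _ = 2 * (2 + ν) * ‖h‖ * ‖x + h‖ * (‖x + h‖ + ‖x‖) := by ring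

end Gradient

theorem grad_norm_upper_bound_general {n m : ℕ} (ν ρ : ℝ) (hν : 0 < ν)
    (A : Fin m → Matrix (Fin n) (Fin n) ℂ)
    (hA : ∀ p q : EuclideanSpace ℂ (Fin n), ‖p‖ = 1 → ‖q‖ = 1 →
      specNorm (Gmat A p q) < ν)
    (h x : EuclideanSpace ℂ (Fin n)) (hhx : ‖h‖ ≤ ρ * ‖x‖) :
    ‖wfGrad A x (x + h)‖ ^ 2
      ≤ 4 * (2 + ν) ^ 2 * (ρ ^ 2 + 3 * ρ + 2) ^ 2 * ‖h‖ ^ 2 * ‖x‖ ^ 4 := by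
  have hz : ‖x + h‖ ≤ (1 + ρ) * ‖x‖ := (norm_add_le x h).trans (by linarith)
  have hzx : ‖x + h‖ * (‖x + h‖ + ‖x‖) ≤ (ρ ^ 2 + 3 * ρ + 2) * ‖x‖ ^ 2 :=
    calc ‖x + h‖ * (‖x + h‖ + ‖x‖) ≤ ((1 + ρ) * ‖x‖) * ((1 + ρ) * ‖x‖ + ‖x‖) := by
          have hx_nonneg : 0 ≤ (1 + ρ) * ‖x‖ := (norm_nonneg _).trans hz
          gcongr
      _ = (ρ ^ 2 + 3 * ρ + 2) * ‖x‖ ^ 2 := by ring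
  have hg : ‖wfGrad A x (x + h)‖ ≤ 2 * (2 + ν) * ‖h‖ * ((ρ ^ 2 + 3 * ρ + 2) * ‖x‖ ^ 2) :=
    calc ‖wfGrad A x (x + h)‖ ≤ 2 * (2 + ν) * ‖h‖ * (‖x + h‖ * (‖x + h‖ + ‖x‖)) := by
          rw [← mul_assoc]; exact norm_wfGrad_le (fun p q hp hq => (hA p q hp hq).le) x h
      _ ≤ 2 * (2 + ν) * ‖h‖ * ((ρ ^ 2 + 3 * ρ + 2) * ‖x‖ ^ 2) := by gcongr
  calc ‖wfGrad A x (x + h)‖ ^ 2 ≤ (2 * (2 + ν) * ‖h‖ * ((ρ ^ 2 + 3 * ρ + 2) * ‖x‖ ^ 2)) ^ 2 := by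
        gcongr
    _ = 4 * (2 + ν) ^ 2 * (ρ ^ 2 + 3 * ρ + 2) ^ 2 * ‖h‖ ^ 2 * ‖x‖ ^ 4 := by ring

/-- Upper bound `‖∇f(z)‖² ≤ c₂(ν, ρ) ‖h‖² ‖x‖⁴` for `z = x + h` with `‖h‖ ≤ ρ ‖x‖`,
under the uniform spectral-norm concentration hypothesis, where
`c₂(ν, ρ) = 4 (2 + ν)² (ρ² + 3ρ + 2)²`. -/
theorem grad_norm_upper_bound {n m : ℕ} (ν ρ : ℝ) (hν : 0 < ν) (hρ : 0 < ρ)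
    (A : Fin m → Matrix (Fin n) (Fin n) ℂ)
    (hA : ∀ p q : EuclideanSpace ℂ (Fin n), ‖p‖ = 1 → ‖q‖ = 1 →
      specNorm (Gmat A p q) < ν)
    (h x : EuclideanSpace ℂ (Fin n)) (hhx : ‖h‖ ≤ ρ * ‖x‖) :
    ‖wfGrad A x (x + h)‖ ^ 2
      ≤ 4 * (2 + ν) ^ 2 * (ρ ^ 2 + 3 * ρ + 2) ^ 2 * ‖h‖ ^ 2 * ‖x‖ ^ 4 :=
  grad_norm_upper_bound_general ν ρ hν A hA h x hhx
end
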